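/- Let n ≥ 4 with n ≡ 1 (mod 3) and let H_n be the complete multipartite graph with one part of size 4 and (n-4)/3 parts of size 3, and let G_n be the graph obtained from H_n by adding a 4-cycle within the part of size 4. Then H_n and G_n are non-isomorphic graphs on n vertices that both have exactly 4·3^{(n-4)/3} maximal cliques. -/

import Mathlib

open SimpleGraph

/-- `s` is a maximal clique of the simple graph `G`. -/
def MaxClique {V : Type*} (G : SimpleGraph V) (s : Set V) : Prop :=
  G.IsClique s ∧ ∀ t : Set V, G.IsClique t → s ⊆ t → s = t

/-- The graph obtained from `G` by adding the edge `(u,v)`. -/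
def addEdge {V : Type*} (G : SimpleGraph V) (u v : V) : SimpleGraph V :=
  G ⊔ SimpleGraph.fromEdgeSet {s(u, v)}

/-- The graph obtained from `G` by adding the set of edges `H`. -/
def addEdges {V : Type*} (G : SimpleGraph V) (H : Set (Sym2 V)) : SimpleGraph V :=
  G ⊔ SimpleGraph.fromEdgeSet H

/-- The number of maximal cliques of `G`. -/
noncomputable def numMaxCliques {V : Type*} (G : SimpleGraph V) : ℕ :=
  Nat.card {s : Set V // MaxClique G s}

/-- `f k`: the maximum possible number of maximal cliques in a graph on `k` vertices. -/
noncomputable def maxNumMaxCliques (k : ℕ) : ℕ :=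
  sSup {m | ∃ G : SimpleGraph (Fin k), m = numMaxCliques G}

/-- Index of the part containing vertex `i`: part 0 is `{0,1,2,3}`, then triples. -/
def part (n : ℕ) (i : Fin n) : ℕ := if (i : ℕ) < 4 then 0 else ((i : ℕ) - 4) / 3 + 1

/-- Adjacency in a 4-cycle on `{0,1,2,3}`. -/
def cyc4 (a b : ℕ) : Prop := (a + 1) % 4 = b % 4 ∨ (b + 1) % 4 = a % 4

/-- The complete multipartite graph with parts `S₀` of size 4 and triples,
    together with a 4-cycle added inside `S₀`. -/
def Gmm (n : ℕ) : SimpleGraph (Fin n) where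
  Adj i j := i ≠ j ∧ (part n i ≠ part n j ∨ ((i : ℕ) < 4 ∧ (j : ℕ) < 4 ∧ cyc4 i j))
  symm := by
    constructor; intro i j ⟨h1, h2⟩
    refine ⟨h1.symm, ?_⟩
    rcases h2 with h | ⟨hi, hj, hc⟩
    · exact Or.inl h.symm
    · exact Or.inr ⟨hj, hi, hc.symm⟩
  loopless := by constructor; intro i h; exact h.1 rfl

/-- The complete multipartite graph `H_n` with one part of size 4 and triples. -/
def Hmm (n : ℕ) : SimpleGraph (Fin n) where
  Adj i j := part n i ≠ part n j
  symm := by constructor; intro i j h; exact h.symm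
  loopless := by constructor; intro i h; exact h rfl

/-!
Vertices in different parts are adjacent in both graphs, so a set is a maximal clique exactly when
its trace on every part is a maximal clique of the graph induced on that part; the number of
maximal cliques is therefore the product over the parts. In `H_n` every part induces an
edgeless graph, whose maximal cliques are the singletons, giving `4 · 3 ^ ((n - 4) / 3)`. In
`G_n` the part of size 4 induces a 4-cycle, which is triangle-free, so its maximal cliques are
its 4 edges and the count is the same. Finally `H_n` is a proper spanning subgraph of `G_n`, so
it has fewer edges and the two graphs are not isomorphic.
-/

namespace SimpleGraph

variable {V W : Type*} {G : SimpleGraph V} {G' : SimpleGraph W}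

theorem Iso.isClique_image_iff (e : G ≃g G') {s : Set V} :
    G'.IsClique (e '' s) ↔ G.IsClique s := by
  rw [IsClique, e.injective.injOn.pairwise_image]
  exact Iff.of_eq (congrArg s.Pairwise (by ext; exact e.map_adj_iff))

theorem Iso.symm_image_image (e : G ≃g G') (s : Set V) : e.symm '' (e '' s) = s :=
  e.toEquiv.symm_image_image s

theorem Iso.maxClique_image (e : G ≃g G') {s : Set V} (hs : MaxClique G s) :
    MaxClique G' (e '' s) := by
  refine ⟨e.isClique_image_iff.2 hs.1, fun t ht hst => ?_⟩
  have hsub : s ⊆ e.symm '' t := e.symm_image_image s ▸ Set.image_mono hst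
  rw [hs.2 _ (e.symm.isClique_image_iff.2 ht) hsub]
  exact e.symm.symm_image_image t

theorem Iso.numMaxCliques_eq (e : G ≃g G') : numMaxCliques G = numMaxCliques G' :=
  Nat.card_congr <| (Equiv.Set.congr e.toEquiv).subtypeEquiv fun s =>
    ⟨e.maxClique_image, fun h => e.symm_image_image s ▸ e.symm.maxClique_image h⟩

theorem not_nonempty_iso_of_lt [Finite V] {G₁ G₂ : SimpleGraph V} (h : G₁ < G₂) :
    ¬ Nonempty (G₁ ≃g G₂) := by
  rintro ⟨e⟩
  have := Set.ncard_lt_ncard (edgeSet_ssubset_edgeSet.2 h) (Set.toFinite _)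
  rw [← Nat.card_coe_set_eq, ← Nat.card_coe_set_eq, Nat.card_congr e.mapEdgeSet] at this
  exact this.false

theorem maxClique_bot_iff [Nonempty V] {s : Set V} :
    MaxClique (⊥ : SimpleGraph V) s ↔ ∃ v, s = {v} := by
  constructor
  · rintro ⟨hs, hmax⟩
    rcases (isClique_bot_iff.1 hs).eq_empty_or_singleton with rfl | hv
    · obtain ⟨v⟩ := ‹Nonempty V›
      exact absurd (hmax {v} (isClique_bot_iff.2 Set.subsingleton_singleton) (Set.empty_subset _))
        (Set.singleton_nonempty v).ne_empty.symm
    · exact hv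
  · rintro ⟨v, rfl⟩
    refine ⟨isClique_bot_iff.2 Set.subsingleton_singleton, fun t ht hvt => ?_⟩
    exact ((isClique_bot_iff.1 ht).eq_singleton_of_mem (hvt rfl)).symm

theorem numMaxCliques_bot [Nonempty V] : numMaxCliques (⊥ : SimpleGraph V) = Nat.card V := by
  refine (Nat.card_congr <| Equiv.ofBijective
    (fun v => (⟨{v}, maxClique_bot_iff.2 ⟨v, rfl⟩⟩ :
      {s // MaxClique (⊥ : SimpleGraph V) s}))
    ⟨fun _ _ h => Set.singleton_injective (congrArg Subtype.val h), ?_⟩).symm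
  rintro ⟨s, hs⟩
  obtain ⟨v, rfl⟩ := maxClique_bot_iff.1 hs
  exact ⟨v, rfl⟩

theorem IsClique.subset_pair_of_cliqueFree_three (h3 : G.CliqueFree 3) {s : Set V}
    (hs : G.IsClique s) {v w : V} (hv : v ∈ s) (hw : w ∈ s) (hvw : v ≠ w) : s ⊆ {v, w} := by
  classical
  intro x hx
  by_contra hxvw
  simp only [Set.mem_insert_iff, Set.mem_singleton_iff, not_or] at hxvw
  exact h3 {v, w, x} <| is3Clique_triple_iff.2
    ⟨hs hv hw hvw, hs hv hx (Ne.symm hxvw.1), hs hw hx (Ne.symm hxvw.2)⟩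

theorem maxClique_iff_of_cliqueFree_three [Nonempty V] (h3 : G.CliqueFree 3)
    (hdeg : ∀ v, ∃ w, G.Adj v w) {s : Set V} :
    MaxClique G s ↔ ∃ e ∈ G.edgeSet, (e : Set V) = s := by
  constructor
  · intro hs
    obtain ⟨a, ha, c, hc, hac⟩ : s.Nontrivial := by
      by_contra hnt
      rw [Set.not_nontrivial_iff] at hnt
      obtain ⟨a, hsa⟩ : ∃ a, s ⊆ {a} := by
        rcases hnt.eq_empty_or_singleton with rfl | ⟨a, rfl⟩
        · exact ⟨Classical.arbitrary V, Set.empty_subset _⟩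
        · exact ⟨a, subset_rfl⟩
      obtain ⟨b, hab⟩ := hdeg a
      have hsab := hs.2 {a, b} (isClique_pair.2 fun _ => hab)
        (hsa.trans (Set.singleton_subset_iff.2 (Set.mem_insert a {b})))
      rw [hsab] at hnt
      exact hab.ne (hnt (by simp) (by simp))
    refine ⟨s(a, c), hs.1 ha hc hac, ?_⟩
    rw [Sym2.coe_mk]
    exact (Set.insert_subset ha (Set.singleton_subset_iff.2 hc)).antisymm
      (hs.1.subset_pair_of_cliqueFree_three h3 ha hc hac)
  · rintro ⟨e, he, rfl⟩
    induction e using Sym2.ind with | h v w => ?_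
    rw [Sym2.coe_mk]
    refine ⟨isClique_pair.2 fun _ => he, fun t ht hvw => ?_⟩
    exact hvw.antisymm
      (ht.subset_pair_of_cliqueFree_three h3 (hvw (by simp)) (hvw (by simp)) he.ne)

theorem numMaxCliques_eq_card_edgeSet [Nonempty V] (h3 : G.CliqueFree 3)
    (hdeg : ∀ v, ∃ w, G.Adj v w) : numMaxCliques G = Nat.card G.edgeSet := by
  refine (Nat.card_congr <| Equiv.ofBijective
    (fun e : G.edgeSet => (⟨((e : Sym2 V) : Set V),
      (maxClique_iff_of_cliqueFree_three h3 hdeg).2 ⟨e, e.2, rfl⟩⟩ : {s // MaxClique G s}))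
    ⟨fun _ _ h => Subtype.ext (SetLike.coe_injective (congrArg Subtype.val h)), ?_⟩).symm
  rintro ⟨s, hs⟩
  obtain ⟨e, he, rfl⟩ := (maxClique_iff_of_cliqueFree_three h3 hdeg).1 hs
  exact ⟨⟨e, he⟩, rfl⟩

theorem numMaxCliques_cycleGraph_four : numMaxCliques (cycleGraph 4) = 4 := by
  rw [numMaxCliques_eq_card_edgeSet]
  · rw [Nat.card_eq_fintype_card, ← edgeFinset_card]
    decide
  · exact ((cycleGraph.bicoloring_of_even 4 (by decide)).colorable).cliqueFree (by decide)
  · intro v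
    exact ⟨v + 1, by simp [cycleGraph_adj]⟩

end SimpleGraph

def Set.equivPiFibre {V ι : Type*} (p : V → ι) : Set V ≃ ∀ i, Set {v | p v = i} where
  toFun s i := Subtype.val ⁻¹' s
  invFun T := {v | ⟨v, rfl⟩ ∈ T (p v)}
  left_inv _ := rfl
  right_inv T := by
    funext i
    ext ⟨v, rfl⟩
    rfl

theorem Set.subset_iff_forall_equivPiFibre_subset {V ι : Type*} {p : V → ι} {s t : Set V} :
    s ⊆ t ↔ ∀ i, Set.equivPiFibre p s i ⊆ Set.equivPiFibre p t i :=
  ⟨fun h _ _ hv => h hv, fun h v hv => h (p v) (a := ⟨v, rfl⟩) hv⟩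

namespace SimpleGraph

variable {V ι : Type*} {G : SimpleGraph V} {p : V → ι}

theorem isClique_iff_forall_fibre (hp : ∀ ⦃v w⦄, p v ≠ p w → G.Adj v w) {s : Set V} :
    G.IsClique s ↔ ∀ i, (G.induce {v | p v = i}).IsClique (Set.equivPiFibre p s i) := by
  refine ⟨fun hs i v hv w hw hvw => hs hv hw (Subtype.val_injective.ne hvw), ?_⟩
  intro h v hv w hw hvw
  by_cases hpvw : p v = p w
  · exact h (p w) (x := ⟨v, hpvw⟩) (y := ⟨w, rfl⟩) hv hw
      fun h' => hvw (congrArg Subtype.val h')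
  · exact hp hpvw

theorem maxClique_iff_forall_fibre (hp : ∀ ⦃v w⦄, p v ≠ p w → G.Adj v w)
    {s : Set V} :
    MaxClique G s ↔ ∀ i, MaxClique (G.induce {v | p v = i}) (Set.equivPiFibre p s i) := by
  classical
  set e := Set.equivPiFibre p
  constructor
  · intro hs i
    refine ⟨(isClique_iff_forall_fibre hp).1 hs.1 i, fun t ht hst => ?_⟩
    have hclique : G.IsClique (e.symm (Function.update (e s) i t)) := by
      rw [isClique_iff_forall_fibre hp, e.apply_symm_apply]
      intro j
      rcases eq_or_ne j i with rfl | hj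
      · rw [Function.update_self]; exact ht
      · rw [Function.update_of_ne hj]; exact (isClique_iff_forall_fibre hp).1 hs.1 j
    have hsub : s ⊆ e.symm (Function.update (e s) i t) := by
      rw [Set.subset_iff_forall_equivPiFibre_subset, e.apply_symm_apply]
      intro j
      rcases eq_or_ne j i with rfl | hj
      · rw [Function.update_self]; exact hst
      · rw [Function.update_of_ne hj]
    rw [hs.2 _ hclique hsub, e.apply_symm_apply, Function.update_self]
  · intro h
    refine ⟨(isClique_iff_forall_fibre hp).2 fun i => (h i).1, fun t ht hst => ?_⟩
    refine e.injective (funext fun i => (h i).2 _ ((isClique_iff_forall_fibre hp).1 ht i) ?_)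
    exact Set.subset_iff_forall_equivPiFibre_subset.1 hst i

theorem numMaxCliques_eq_prod_fibre [Fintype ι] (hp : ∀ ⦃v w⦄, p v ≠ p w → G.Adj v w) :
    numMaxCliques G = ∏ i, numMaxCliques (G.induce {v | p v = i}) := by
  simp only [numMaxCliques]
  rw [← Nat.card_pi]
  exact Nat.card_congr <|
    ((Set.equivPiFibre p).subtypeEquiv fun _ => maxClique_iff_forall_fibre hp).trans
      (Equiv.subtypePiEquivPi)

end SimpleGraph

theorem Hmm_lt_Gmm {n : ℕ} (hn : 4 ≤ n) : Hmm n < Gmm n := by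
  have hle : Hmm n ≤ Gmm n := fun v w h => ⟨fun hvw => h (hvw ▸ rfl), Or.inl h⟩
  refine lt_of_le_not_ge hle fun hge => ?_
  have hG : (Gmm n).Adj ⟨0, by omega⟩ ⟨1, by omega⟩ :=
    ⟨by simp [Fin.ext_iff], Or.inr ⟨by simp, by simp, by simp [cyc4]⟩⟩
  exact hge hG (by simp [part])

section Parts

variable {m : ℕ}

/-- `part` as a map to a finite index type, so that one can take products over the parts. -/
def partIdx (m : ℕ) (v : Fin (4 + 3 * m)) : Fin (m + 1) :=
  ⟨part _ v, by have := v.isLt; unfold part; split_ifs <;> omega⟩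

theorem partIdx_eq_zero_iff {v : Fin (4 + 3 * m)} : partIdx m v = 0 ↔ (v : ℕ) < 4 := by
  simp only [partIdx, Fin.ext_iff, Fin.val_zero, part]
  grind

theorem partIdx_eq_succ_iff {v : Fin (4 + 3 * m)} {j : Fin m} :
    partIdx m v = j.succ ↔ 4 + 3 * (j : ℕ) ≤ v ∧ (v : ℕ) < 4 + 3 * (j : ℕ) + 3 := by
  have := j.isLt
  simp only [partIdx, Fin.ext_iff, Fin.val_succ, part]
  grind

theorem Hmm_adj_of_partIdx_ne {v w : Fin (4 + 3 * m)} (h : partIdx m v ≠ partIdx m w) :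
    (Hmm _).Adj v w :=
  fun hvw => h (Fin.ext hvw)

theorem Gmm_adj_of_partIdx_ne {v w : Fin (4 + 3 * m)} (h : partIdx m v ≠ partIdx m w) :
    (Gmm _).Adj v w :=
  Hmm_lt_Gmm (by omega) |>.le (Hmm_adj_of_partIdx_ne h)

theorem induce_Hmm_fibre_eq_bot (i : Fin (m + 1)) :
    (Hmm _).induce {v | partIdx m v = i} = ⊥ := by
  ext ⟨v, hv⟩ ⟨w, hw⟩
  simp only [comap_adj, Function.Embedding.subtype_apply, bot_adj, iff_false]
  exact fun h => h (congrArg Fin.val (hv.trans hw.symm))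

theorem induce_Gmm_fibre_succ_eq_bot (j : Fin m) :
    (Gmm _).induce {v | partIdx m v = j.succ} = ⊥ := by
  ext ⟨v, hv⟩ ⟨w, hw⟩
  simp only [comap_adj, Function.Embedding.subtype_apply, bot_adj, iff_false]
  rintro ⟨-, hpart | ⟨hv4, -⟩⟩
  · exact hpart (congrArg Fin.val (hv.trans hw.symm))
  · have := partIdx_eq_succ_iff.1 hv
    omega

theorem partIdx_surjective : Function.Surjective (partIdx m) := by
  intro i
  induction i using Fin.cases with
  | zero => exact ⟨⟨0, by omega⟩, partIdx_eq_zero_iff.2 (by simp)⟩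
  | succ j => exact ⟨⟨4 + 3 * j, by omega⟩, partIdx_eq_succ_iff.2 ⟨le_rfl, by simp⟩⟩

def fibreZeroEquiv (m : ℕ) : {v | partIdx m v = 0} ≃ Fin 4 where
  toFun v := ⟨v.1, partIdx_eq_zero_iff.1 v.2⟩
  invFun k := ⟨⟨k, by omega⟩, partIdx_eq_zero_iff.2 k.isLt⟩
  left_inv _ := rfl
  right_inv _ := rfl

theorem card_fibre_zero : Nat.card {v | partIdx m v = 0} = 4 :=
  Nat.card_eq_of_equiv_fin (fibreZeroEquiv m)

theorem card_fibre_succ (j : Fin m) : Nat.card {v | partIdx m v = j.succ} = 3 :=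
  Nat.card_eq_of_equiv_fin
  { toFun v := ⟨v.1 - (4 + 3 * j), by have := partIdx_eq_succ_iff.1 v.2; omega⟩
    invFun k := ⟨⟨4 + 3 * j + k, by omega⟩, partIdx_eq_succ_iff.2 ⟨by simp, by simp⟩⟩
    left_inv v := by
      have := partIdx_eq_succ_iff.1 v.2
      ext
      simp only
      omega
    right_inv k := by
      ext
      simp }

theorem numMaxCliques_induce_fibre_of_eq_bot {G : SimpleGraph (Fin (4 + 3 * m))} {i : Fin (m + 1)}
    (h : G.induce {v | partIdx m v = i} = ⊥) :
    numMaxCliques (G.induce {v | partIdx m v = i}) = Nat.card {v | partIdx m v = i} := by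
  obtain ⟨v, hv⟩ := partIdx_surjective i
  have : Nonempty {v | partIdx m v = i} := ⟨⟨v, hv⟩⟩
  rw [h, numMaxCliques_bot]

theorem cycleGraph_four_adj_iff {a b : Fin 4} : (cycleGraph 4).Adj a b ↔ cyc4 a b := by
  revert a b
  unfold cyc4
  decide

theorem Gmm_adj_iff_cyc4 {n : ℕ} {v w : Fin n} (hv : (v : ℕ) < 4) (hw : (w : ℕ) < 4) :
    (Gmm n).Adj v w ↔ cyc4 v w := by
  refine ⟨fun ⟨_, h⟩ => h.elim (fun h => absurd (by simp [part, hv, hw]) h) (·.2.2),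
    fun h => ⟨fun hvw => ?_, Or.inr ⟨hv, hw, h⟩⟩⟩
  subst hvw
  unfold cyc4 at h
  omega

def induceGmmFibreZeroIso (m : ℕ) :
    (Gmm _).induce {v | partIdx m v = 0} ≃g cycleGraph 4 where
  toEquiv := fibreZeroEquiv m
  map_rel_iff' {v w} := by
    rw [cycleGraph_four_adj_iff, comap_adj, Function.Embedding.subtype_apply,
      Function.Embedding.subtype_apply, Gmm_adj_iff_cyc4 (partIdx_eq_zero_iff.1 v.2)
        (partIdx_eq_zero_iff.1 w.2)]
    rfl

end Parts

theorem stmt_12 (n : ℕ) (h4 : 4 ≤ n) (h3 : n % 3 = 1) :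
    ¬ Nonempty (Hmm n ≃g Gmm n) ∧
    numMaxCliques (Hmm n) = 4 * 3 ^ ((n - 4) / 3) ∧
    numMaxCliques (Gmm n) = 4 * 3 ^ ((n - 4) / 3) := by
  obtain ⟨m, rfl⟩ : ∃ m, n = 4 + 3 * m := ⟨(n - 4) / 3, by omega⟩
  rw [show (4 + 3 * m - 4) / 3 = m by omega]
  refine ⟨not_nonempty_iso_of_lt (Hmm_lt_Gmm h4), ?_, ?_⟩
  · rw [numMaxCliques_eq_prod_fibre (p := partIdx m) fun _ _ => Hmm_adj_of_partIdx_ne,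
      Fin.prod_univ_succ]
    simp only [numMaxCliques_induce_fibre_of_eq_bot (induce_Hmm_fibre_eq_bot _), card_fibre_zero,
      card_fibre_succ, Finset.prod_const, Finset.card_univ, Fintype.card_fin]
  · rw [numMaxCliques_eq_prod_fibre (p := partIdx m) fun _ _ => Gmm_adj_of_partIdx_ne,
      Fin.prod_univ_succ, (induceGmmFibreZeroIso m).numMaxCliques_eq, numMaxCliques_cycleGraph_four]
    simp only [numMaxCliques_induce_fibre_of_eq_bot (induce_Gmm_fibre_succ_eq_bot _),
      card_fibre_succ, Finset.prod_const, Finset.card_univ, Fintype.card_fin]
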